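/- arXiv:2412.08114 — 2 statements merged into one kernel-verified Lean document; each statement's English description precedes it below -/
import Mathlib

section
/- Let f = g + h where g : ℝⁿ → ℝ is convex and differentiable with L-Lipschitz gradient (L > 0) and h : ℝⁿ → ℝ is convex. If x⁺ = prox_{αh}(x − α ∇g(x)) with fixed step size α ≤ 1/L, then f(x⁺) ≤ f(x*) + (1/(2α))(‖x − x*‖² − ‖x⁺ − x*‖²) for any x*. -/
/-!
The prox objective `z ↦ ‖z - (x - α ∇g x)‖² / (2α) + h z` is `1/α`-strongly convex, so its
minimizer `x⁺` beats any `x*` by the margin `‖x* - x⁺‖² / (2α)`. Completing the square, the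
objective is, up to a constant, the model `⟪∇g x, z - x⟫ + ‖z - x‖² / (2α) + h z`. Since
`L ≤ 1/α`, the descent lemma makes this model an upper bound for `g - g x + h` at `x⁺`, while the
gradient inequality of the convex `g` makes it a lower bound at `x*`.
-/

open scoped NNReal RealInnerProductSpace
open Set Filter Topology

variable {E : Type*} [NormedAddCommGroup E] [InnerProductSpace ℝ E]

section StrongConvexity

variable {s : Set E} {m : ℝ} {f : E → ℝ}

lemma StrongConvexOn.add_convexOn {g : E → ℝ} (hf : StrongConvexOn s m f)
    (hg : ConvexOn ℝ s g) : StrongConvexOn s m (f + g) := by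
  have hsum := hf.add (uniformConvexOn_zero.2 hg)
  rwa [add_zero] at hsum

lemma strongConvexOn_univ_mul_norm_sub_sq (β : ℝ) (y : E) :
    StrongConvexOn univ (2 * β) fun z ↦ β * ‖z - y‖ ^ 2 := by
  rw [strongConvexOn_iff_convex]
  have hlin : ConvexOn ℝ univ fun z ↦ (-(2 * β)) • innerₛₗ ℝ y z + β * ‖y‖ ^ 2 :=
    ((-(2 * β)) • innerₛₗ ℝ y).convexOn convex_univ |>.add_const _
  convert hlin using 2 with z
  rw [norm_sub_sq_real, real_inner_comm]
  simp only [innerₛₗ_apply_apply, smul_eq_mul]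
  ring

lemma StrongConvexOn.add_norm_sub_sq_le_of_isMinOn {x₀ z : E} (hf : StrongConvexOn s m f)
    (hmin : IsMinOn f s x₀) (hx₀ : x₀ ∈ s) (hz : z ∈ s) :
    f x₀ + m / 2 * ‖z - x₀‖ ^ 2 ≤ f z := by
  -- compare `x₀` with `t • z + (1 - t) • x₀` and let `t → 0⁺`
  set c := m / 2 * ‖z - x₀‖ ^ 2 with hc
  have hlim : Tendsto (fun t : ℝ ↦ f z - (1 - t) * c) (𝓝[>] 0) (𝓝 (f z - c)) := by
    have : Continuous fun t : ℝ ↦ f z - (1 - t) * c := by fun_prop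
    simpa using (this.tendsto 0).mono_left nhdsWithin_le_nhds
  have hbound : ∀ᶠ t in 𝓝[>] (0 : ℝ), f x₀ ≤ f z - (1 - t) * c := by
    filter_upwards [Ioo_mem_nhdsGT (zero_lt_one' ℝ)] with t ⟨ht₀, ht₁⟩
    have hseg := hf.2 hz hx₀ ht₀.le (sub_nonneg.2 ht₁.le) (add_sub_cancel t 1)
    have hle : f x₀ ≤ f _ := hmin (hf.1 hz hx₀ ht₀.le (sub_nonneg.2 ht₁.le) (add_sub_cancel t 1))
    simp only [smul_eq_mul, ← hc] at hseg
    have hscaled : t * f x₀ ≤ t * (f z - (1 - t) * c) := by linarith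
    exact le_of_mul_le_mul_left hscaled ht₀
  linarith [ge_of_tendsto hlim hbound]

end StrongConvexity

lemma LipschitzWith.inner_sub_lineMap_le {g' : E → E} {L : ℝ≥0} (hlip : LipschitzWith L g')
    (x y : E) {t : ℝ} (ht : 0 ≤ t) :
    ⟪g' (AffineMap.lineMap x y t) - g' x, y - x⟫ ≤ L * t * ‖y - x‖ ^ 2 :=
  calc ⟪g' (AffineMap.lineMap x y t) - g' x, y - x⟫
      ≤ dist (g' (AffineMap.lineMap x y t)) (g' x) * ‖y - x‖ := by
        rw [dist_eq_norm]; exact real_inner_le_norm _ _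
    _ ≤ L * dist (AffineMap.lineMap x y t) x * ‖y - x‖ := by
        gcongr; exact hlip.dist_le_mul _ _
    _ = L * t * ‖y - x‖ ^ 2 := by
        rw [dist_lineMap_left, Real.norm_of_nonneg ht, dist_eq_norm, norm_sub_rev]; ring

section Gradient

variable [CompleteSpace E] {g : E → ℝ} {g' : E → E}

lemma HasGradientAt.hasDerivAt_comp_lineMap {x y v : E} {t : ℝ}
    (hg : HasGradientAt g v (AffineMap.lineMap x y t)) :
    HasDerivAt (fun t ↦ g (AffineMap.lineMap x y t)) ⟪v, y - x⟫ t := by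
  simpa [Function.comp_def] using hg.hasFDerivAt.comp_hasDerivAt t AffineMap.hasDerivAt_lineMap

lemma ConvexOn.add_inner_le_of_hasGradientAt {s : Set E} {x y v : E}
    (hconv : ConvexOn ℝ s g) (hx : x ∈ s) (hy : y ∈ s) (hg : HasGradientAt g v x) :
    g x + ⟪v, y - x⟫ ≤ g y := by
  have hline := hconv.comp_affineMap (AffineMap.lineMap (k := ℝ) x y)
  have hderiv : HasDerivAt (fun t ↦ g (AffineMap.lineMap x y t)) ⟪v, y - x⟫ (0 : ℝ) :=
    HasGradientAt.hasDerivAt_comp_lineMap (by simpa using hg)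
  have h := hline.le_slope_of_hasDerivAt (x := 0) (y := 1) (by simpa using hx) (by simpa using hy)
    zero_lt_one hderiv
  simp only [slope_def_field, Function.comp_apply, AffineMap.lineMap_apply_one,
    AffineMap.lineMap_apply_zero, sub_zero, div_one] at h
  linarith

lemma LipschitzWith.le_add_inner_add_sq_of_hasGradientAt {L : ℝ≥0}
    (hg : ∀ x, HasGradientAt g (g' x) x) (hlip : LipschitzWith L g') (x y : E) :
    g y ≤ g x + ⟪g' x, y - x⟫ + L / 2 * ‖y - x‖ ^ 2 := by
  have hderiv (t : ℝ) : HasDerivAt (fun t ↦ g (AffineMap.lineMap x y t))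
      ⟪g' (AffineMap.lineMap x y t), y - x⟫ t := (hg _).hasDerivAt_comp_lineMap
  have hbound (t : ℝ) : HasDerivAt (fun t ↦ g x + t * ⟪g' x, y - x⟫ + L / 2 * t ^ 2 * ‖y - x‖ ^ 2)
      (⟪g' x, y - x⟫ + L * t * ‖y - x‖ ^ 2) t := by
    refine ((((hasDerivAt_id' t).mul_const _).const_add (g x)).fun_add
      (((hasDerivAt_pow 2 t).const_mul ((L : ℝ) / 2)).mul_const (‖y - x‖ ^ 2))).congr_deriv ?_
    ring
  have h := image_le_of_deriv_right_le_deriv_boundary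
    (fun t _ ↦ (hderiv t).continuousAt.continuousWithinAt)
    (fun t _ ↦ (hderiv t).hasDerivWithinAt) (by simp)
    (fun t _ ↦ (hbound t).continuousAt.continuousWithinAt)
    (fun t _ ↦ (hbound t).hasDerivWithinAt)
    (fun t ht ↦ by
      have := hlip.inner_sub_lineMap_le x y ht.1
      rw [inner_sub_left] at this
      linarith)
    (right_mem_Icc.2 zero_le_one)
  simpa using h

end Gradient

theorem prox_grad_one_step_general {n : ℕ}
    (g h : EuclideanSpace ℝ (Fin n) → ℝ)
    (gradG : EuclideanSpace ℝ (Fin n) → EuclideanSpace ℝ (Fin n))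
    (hgconv : ConvexOn ℝ Set.univ g)
    (hhconv : ConvexOn ℝ Set.univ h)
    (hgrad : ∀ x, HasGradientAt g (gradG x) x)
    (L : ℝ≥0) (hlip : LipschitzWith L gradG)
    (α : ℝ) (hα : 0 < α) (hαL : α ≤ 1 / (L : ℝ))
    (x xplus : EuclideanSpace ℝ (Fin n))
    (hprox : ∀ z, (1 / (2 * α)) * ‖xplus - (x - α • gradG x)‖ ^ 2 + h xplus ≤
      (1 / (2 * α)) * ‖z - (x - α • gradG x)‖ ^ 2 + h z) :
    ∀ xstar, g xplus + h xplus ≤ g xstar + h xstar +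
      (1 / (2 * α)) * (‖x - xstar‖ ^ 2 - ‖xplus - xstar‖ ^ 2) := by
  intro xstar
  have hmin := ((strongConvexOn_univ_mul_norm_sub_sq (1 / (2 * α)) (x - α • gradG x)).add_convexOn
    hhconv).add_norm_sub_sq_le_of_isMinOn (isMinOn_univ_iff.2 hprox) (mem_univ _) (mem_univ xstar)
  have hsquare (w) : 1 / (2 * α) * ‖w - (x - α • gradG x)‖ ^ 2 =
      1 / (2 * α) * ‖w - x‖ ^ 2 + ⟪gradG x, w - x⟫ + α / 2 * ‖gradG x‖ ^ 2 := by
    rw [sub_sub_eq_add_sub, add_sub_right_comm, norm_add_sq_real, inner_smul_right, norm_smul,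
      Real.norm_of_nonneg hα.le, real_inner_comm]
    field_simp
  have hdescent := hlip.le_add_inner_add_sq_of_hasGradientAt hgrad x xplus
  have hsupport := hgconv.add_inner_le_of_hasGradientAt (mem_univ x) (mem_univ xstar) (hgrad x)
  have hstep : (L : ℝ) / 2 ≤ 1 / (2 * α) := by
    rw [div_le_div_iff₀ two_pos (by positivity)]
    linarith [mul_le_of_le_div₀ zero_le_one L.coe_nonneg hαL]
  simp only [Pi.add_apply, hsquare] at hmin
  rw [norm_sub_rev x, norm_sub_rev xplus]
  linarith [mul_le_mul_of_nonneg_right hstep (sq_nonneg ‖xplus - x‖)]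

theorem prox_grad_one_step {n : ℕ}
    (g h : EuclideanSpace ℝ (Fin n) → ℝ)
    (gradG : EuclideanSpace ℝ (Fin n) → EuclideanSpace ℝ (Fin n))
    (hgconv : ConvexOn ℝ Set.univ g)
    (hhconv : ConvexOn ℝ Set.univ h)
    (hgrad : ∀ x, HasGradientAt g (gradG x) x)
    (L : ℝ≥0) (hL : 0 < L) (hlip : LipschitzWith L gradG)
    (α : ℝ) (hα : 0 < α) (hαL : α ≤ 1 / (L : ℝ))
    (x xplus : EuclideanSpace ℝ (Fin n))
    (hprox : ∀ z, (1 / (2 * α)) * ‖xplus - (x - α • gradG x)‖ ^ 2 + h xplus ≤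
      (1 / (2 * α)) * ‖z - (x - α • gradG x)‖ ^ 2 + h z) :
    ∀ xstar, g xplus + h xplus ≤ g xstar + h xstar +
      (1 / (2 * α)) * (‖x - xstar‖ ^ 2 - ‖xplus - xstar‖ ^ 2) :=
  prox_grad_one_step_general g h gradG hgconv hhconv hgrad L hlip α hα hαL x xplus hprox
end

section
/- Let f = g + h with g convex differentiable having L-Lipschitz gradient and h convex, and let x* be a minimizer of f. Proximal gradient descent with fixed step size α ≤ 1/L, i.e., x_{i+1} = prox_{αh}(x_i − α∇g(x_i)), satisfies f(x_i) − f(x*) ≤ ‖x_0 − x*‖² / (2αi) for every i ≥ 1; in particular the method converges at rate O(1/i). -/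
/-!
Each proximal gradient step satisfies the three-point inequality
`f(x_{k+1}) ≤ f(z) + (‖x_k - z‖² - ‖x_{k+1} - z‖²) / (2α)` for every `z`: the descent lemma
(with `L ≤ 1/α`) bounds `g(x_{k+1})` by its linearisation at `x_k`, convexity bounds `g(z)` below by
the same linearisation, and the prox objective is `1/α`-strongly convex, so it grows quadratically
away from its minimiser `x_{k+1}`. Taking `z = x_k` shows that `f(x_k)` decreases; taking `z = x*`
and summing telescopes to `i (f(x_i) - f(x*)) ≤ ‖x_0 - x*‖² / (2α)`.
-/

open scoped NNReal RealInnerProductSpace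
open Set

lemma Antitone.natCast_mul_sub_le_of_forall_succ_sub_le {F D : ℕ → ℝ} {c : ℝ} (hF : Antitone F)
    (hFD : ∀ k, F (k + 1) - c ≤ D k - D (k + 1)) (k : ℕ) : k * (F k - c) ≤ D 0 - D k := by
  induction k with
  | zero => simp
  | succ k ih =>
    have hmono : k * F (k + 1) ≤ k * F k := by gcongr; exact hF k.le_succ
    push_cast
    linarith [hFD k]

variable {E : Type*} [NormedAddCommGroup E] [InnerProductSpace ℝ E]

lemma ConvexOn.strongConvexOn_add_sq_norm_sub {s : Set E} {f : E → ℝ} (hf : ConvexOn ℝ s f)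
    (m : ℝ) (y : E) : StrongConvexOn s m fun z ↦ f z + m / 2 * ‖z - y‖ ^ 2 := by
  rw [strongConvexOn_iff_convex]
  have affine : ConvexOn ℝ s fun z ↦ (-m) * ⟪y, z⟫ + m / 2 * ‖y‖ ^ 2 :=
    (((-m) • innerₛₗ ℝ y).convexOn hf.1).add_const _
  refine (hf.add affine).congr fun z _ ↦ ?_
  simp only [Pi.add_apply, norm_sub_sq_real, real_inner_comm]
  ring

lemma StrongConvexOn.add_sq_norm_sub_le_of_isMinOn {s : Set E} {f : E → ℝ} {m : ℝ} {p z : E}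
    (hf : StrongConvexOn s m f) (hp : IsMinOn f s p) (hps : p ∈ s) (hzs : z ∈ s) :
    f p + m / 2 * ‖z - p‖ ^ 2 ≤ f z := by
  set c := m / 2 * ‖z - p‖ ^ 2
  have hsegment : ∀ t ∈ Ioc (0 : ℝ) 1, f p + (1 - t) * c ≤ f z := by
    intro t ⟨ht₀, ht₁⟩
    have hmin : f p ≤ f (t • z + (1 - t) • p) :=
      hp (hf.1 hzs hps ht₀.le (sub_nonneg.2 ht₁) (add_sub_cancel t 1))
    have hconv := hf.2 hzs hps ht₀.le (sub_nonneg.2 ht₁) (add_sub_cancel t 1)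
    rw [smul_eq_mul, smul_eq_mul] at hconv
    refine le_of_mul_le_mul_left ?_ ht₀
    linear_combination hmin.trans hconv
  have hlim : Filter.Tendsto (fun t : ℝ ↦ f p + (1 - t) * c) (nhdsWithin 0 (Ioi 0))
      (nhds (f p + c)) := by
    refine tendsto_nhdsWithin_of_tendsto_nhds ?_
    convert (Continuous.tendsto (f := fun t : ℝ ↦ f p + (1 - t) * c) (by fun_prop) 0) using 2
    ring
  exact le_of_tendsto hlim (Filter.eventually_of_mem (Ioc_mem_nhdsGT zero_lt_one) hsegment)

variable [CompleteSpace E] {f : E → ℝ} {f' : E → E}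

lemma HasGradientAt.hasDerivAt_add_smul {x v g : E} {t : ℝ} (hf : HasGradientAt f g (x + t • v)) :
    HasDerivAt (fun s : ℝ ↦ f (x + s • v)) ⟪g, v⟫ t := by
  have hline : HasDerivAt (fun s : ℝ ↦ x + s • v) v t := by
    simpa using ((hasDerivAt_id t).smul_const v).const_add x
  have h := hf.hasFDerivAt.comp_hasDerivAt t hline
  simp only [InnerProductSpace.toDual_apply_apply] at h
  exact h

lemma ConvexOn.add_inner_sub_le_of_hasGradientAt (hf : ConvexOn ℝ univ f) {x g : E}
    (hx : HasGradientAt f g x) (y : E) : f x + ⟪g, y - x⟫ ≤ f y := by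
  have hconv : ConvexOn ℝ univ fun s : ℝ ↦ f (x + s • (y - x)) := by
    simpa [Function.comp_def, AffineMap.lineMap_apply, add_comm]
      using hf.comp_affineMap (AffineMap.lineMap x y : ℝ →ᵃ[ℝ] E)
  have hderiv := HasGradientAt.hasDerivAt_add_smul (t := 0) (v := y - x) (by simpa using hx)
  have := hconv.le_slope_of_hasDerivAt (mem_univ 0) (mem_univ 1) one_pos hderiv
  simp only [slope_def_field, zero_smul, add_zero, one_smul, add_sub_cancel, sub_zero,
    div_one] at this
  linarith

lemma le_add_inner_sub_add_sq_norm_of_lipschitzWith_gradient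
    (hf : ∀ x, HasGradientAt f (f' x) x) {L : ℝ≥0} (hlip : LipschitzWith L f') (x y : E) :
    f y ≤ f x + ⟪f' x, y - x⟫ + L / 2 * ‖y - x‖ ^ 2 := by
  set v := y - x
  have hderiv (t : ℝ) : HasDerivAt (fun s : ℝ ↦ f (x + s • v)) ⟪f' (x + t • v), v⟫ t :=
    (hf _).hasDerivAt_add_smul
  have hbound (t : ℝ) : HasDerivAt (fun s : ℝ ↦ f x + s * ⟪f' x, v⟫ + L / 2 * s ^ 2 * ‖v‖ ^ 2)
      (⟪f' x, v⟫ + L * t * ‖v‖ ^ 2) t := by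
    refine ((((hasDerivAt_id t).mul_const ⟪f' x, v⟫).const_add (f x)).add
      (((hasDerivAt_pow 2 t).const_mul ((L : ℝ) / 2)).mul_const (‖v‖ ^ 2))).congr_deriv ?_
    push_cast; ring
  have hslope (t : ℝ) (ht : t ∈ Ico (0 : ℝ) 1) :
      ⟪f' (x + t • v), v⟫ ≤ ⟪f' x, v⟫ + L * t * ‖v‖ ^ 2 := by
    have hdist : ‖f' (x + t • v) - f' x‖ ≤ L * (t * ‖v‖) := by
      simpa [dist_eq_norm, norm_smul, abs_of_nonneg ht.1] using hlip.dist_le_mul (x + t • v) x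
    calc ⟪f' (x + t • v), v⟫ = ⟪f' x, v⟫ + ⟪f' (x + t • v) - f' x, v⟫ := by
          rw [inner_sub_left]; ring
      _ ≤ ⟪f' x, v⟫ + ‖f' (x + t • v) - f' x‖ * ‖v‖ := by gcongr; exact real_inner_le_norm _ _
      _ ≤ ⟪f' x, v⟫ + L * (t * ‖v‖) * ‖v‖ := by gcongr
      _ = ⟪f' x, v⟫ + L * t * ‖v‖ ^ 2 := by ring
  have := image_le_of_deriv_right_le_deriv_boundary
    (fun t _ ↦ (hderiv t).continuousAt.continuousWithinAt)
    (fun t _ ↦ (hderiv t).hasDerivWithinAt) (by simp)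
    (fun t _ ↦ (hbound t).continuousAt.continuousWithinAt)
    (fun t _ ↦ (hbound t).hasDerivWithinAt) hslope (right_mem_Icc.2 zero_le_one)
  simpa [v] using this

lemma prox_grad_step_le {g h : E → ℝ} {g' : E → E} (hg : ConvexOn ℝ univ g)
    (hh : ConvexOn ℝ univ h) (hgrad : ∀ x, HasGradientAt g (g' x) x) {L : ℝ≥0}
    (hlip : LipschitzWith L g') {α : ℝ} (hα : 0 < α) (hαL : α ≤ 1 / L) {w p : E}
    (hp : IsMinOn (fun u ↦ 1 / (2 * α) * ‖u - (w - α • g' w)‖ ^ 2 + h u) univ p) (z : E) :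
    g p + h p ≤ g z + h z + 1 / (2 * α) * (‖w - z‖ ^ 2 - ‖p - z‖ ^ 2) := by
  have hLα : (L : ℝ) ≤ 1 / α := by
    rcases eq_zero_or_pos L with hL | hL
    · rw [hL, NNReal.coe_zero]; positivity
    · exact (le_one_div hα hL).1 hαL
  have hdescent : g p ≤ g w + ⟪g' w, p - w⟫ + 1 / (2 * α) * ‖p - w‖ ^ 2 := by
    calc g p ≤ g w + ⟪g' w, p - w⟫ + L / 2 * ‖p - w‖ ^ 2 :=
          le_add_inner_sub_add_sq_norm_of_lipschitzWith_gradient hgrad hlip w p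
      _ ≤ g w + ⟪g' w, p - w⟫ + 1 / α / 2 * ‖p - w‖ ^ 2 := by gcongr
      _ = g w + ⟪g' w, p - w⟫ + 1 / (2 * α) * ‖p - w‖ ^ 2 := by ring
  have hsupport := hg.add_inner_sub_le_of_hasGradientAt (hgrad w) z
  have hprox : StrongConvexOn univ (1 / α)
      (fun u ↦ 1 / (2 * α) * ‖u - (w - α • g' w)‖ ^ 2 + h u) := by
    convert hh.strongConvexOn_add_sq_norm_sub (1 / α) (w - α • g' w) using 1
    ext u
    ring
  have hexpand (u : E) : 1 / (2 * α) * ‖u - (w - α • g' w)‖ ^ 2 =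
      1 / (2 * α) * ‖u - w‖ ^ 2 + ⟪g' w, u - w⟫ + α / 2 * ‖g' w‖ ^ 2 := by
    rw [show u - (w - α • g' w) = (u - w) + α • g' w by abel, norm_add_sq_real,
      real_inner_smul_right, norm_smul, Real.norm_eq_abs, mul_pow, sq_abs, real_inner_comm]
    field_simp
  have hthree := hprox.add_sq_norm_sub_le_of_isMinOn hp (mem_univ p) (mem_univ z)
  simp only [hexpand] at hthree
  rw [norm_sub_rev w z, norm_sub_rev p z]
  linear_combination hdescent + hsupport + hthree

theorem prox_grad_convergence_rate_general {n : ℕ}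
    (g h : EuclideanSpace ℝ (Fin n) → ℝ)
    (gradG : EuclideanSpace ℝ (Fin n) → EuclideanSpace ℝ (Fin n))
    (hgconv : ConvexOn ℝ Set.univ g)
    (hhconv : ConvexOn ℝ Set.univ h)
    (hgrad : ∀ x, HasGradientAt g (gradG x) x)
    (L : ℝ≥0) (hlip : LipschitzWith L gradG)
    (α : ℝ) (hα : 0 < α) (hαL : α ≤ 1 / (L : ℝ))
    (xstar : EuclideanSpace ℝ (Fin n))
    (x : ℕ → EuclideanSpace ℝ (Fin n))
    (hseq : ∀ i, ∀ z,
      (1 / (2 * α)) * ‖x (i + 1) - (x i - α • gradG (x i))‖ ^ 2 + h (x (i + 1)) ≤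
        (1 / (2 * α)) * ‖z - (x i - α • gradG (x i))‖ ^ 2 + h z) :
    ∀ i : ℕ, 1 ≤ i →
      g (x i) + h (x i) - (g xstar + h xstar) ≤ ‖x 0 - xstar‖ ^ 2 / (2 * α * i) := by
  intro i hi
  have hstep (k : ℕ) := prox_grad_step_le hgconv hhconv hgrad hlip hα hαL
    (isMinOn_univ_iff.2 (hseq k))
  have hdecr : Antitone fun k ↦ g (x k) + h (x k) := antitone_nat_of_succ_le fun k ↦ by
    have hstay := hstep k (x k)
    have hgap : 0 ≤ 1 / (2 * α) * ‖x (k + 1) - x k‖ ^ 2 := by positivity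
    simp only [sub_self, norm_zero] at hstay
    linarith
  have hbound : i * (g (x i) + h (x i) - (g xstar + h xstar)) ≤
      1 / (2 * α) * ‖x 0 - xstar‖ ^ 2 := by
    refine (hdecr.natCast_mul_sub_le_of_forall_succ_sub_le
      (D := fun k ↦ 1 / (2 * α) * ‖x k - xstar‖ ^ 2) (fun k ↦ ?_) i).trans ?_
    · linarith [hstep k xstar]
    · simp only [sub_le_self_iff]; positivity
  rw [le_div_iff₀ (by positivity)]
  calc _ = 2 * α * (i * (g (x i) + h (x i) - (g xstar + h xstar))) := by ring
    _ ≤ 2 * α * (1 / (2 * α) * ‖x 0 - xstar‖ ^ 2) := by gcongr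
    _ = ‖x 0 - xstar‖ ^ 2 := by field_simp

theorem prox_grad_convergence_rate {n : ℕ}
    (g h : EuclideanSpace ℝ (Fin n) → ℝ)
    (gradG : EuclideanSpace ℝ (Fin n) → EuclideanSpace ℝ (Fin n))
    (hgconv : ConvexOn ℝ Set.univ g)
    (hhconv : ConvexOn ℝ Set.univ h)
    (hgrad : ∀ x, HasGradientAt g (gradG x) x)
    (L : ℝ≥0) (hL : 0 < L) (hlip : LipschitzWith L gradG)
    (α : ℝ) (hα : 0 < α) (hαL : α ≤ 1 / (L : ℝ))
    (xstar : EuclideanSpace ℝ (Fin n))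
    (hmin : ∀ z, g xstar + h xstar ≤ g z + h z)
    (x : ℕ → EuclideanSpace ℝ (Fin n))
    (hseq : ∀ i, ∀ z,
      (1 / (2 * α)) * ‖x (i + 1) - (x i - α • gradG (x i))‖ ^ 2 + h (x (i + 1)) ≤
        (1 / (2 * α)) * ‖z - (x i - α • gradG (x i))‖ ^ 2 + h z) :
    ∀ i : ℕ, 1 ≤ i →
      g (x i) + h (x i) - (g xstar + h xstar) ≤ ‖x 0 - xstar‖ ^ 2 / (2 * α * i) :=
  prox_grad_convergence_rate_general g h gradG hgconv hhconv hgrad L hlip α hα hαL xstar x hseq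
end
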